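/- If v_r ≥ 2√(g h_r), then the discharge-form inverse Lax curve lies strictly above the upper critical curve: φ̃_r(h) > h·√(g h) for every h > 0 (in particular φ̃_r is strictly positive and never meets the critical curves C̃⁺ and C̃⁻). -/

import Mathlib

/-- Inverse Lax curve through the right state `(hr, vr)`. -/
noncomputable def phir (g hr vr h : ℝ) : ℝ :=
  if h ≤ hr then vr - 2 * Real.sqrt (g * hr) + 2 * Real.sqrt (g * h)
  else vr + (h - hr) * Real.sqrt (g * (h + hr) / (2 * h * hr))

/-- Discharge-form inverse Lax curve through the right state. -/
noncomputable def phirTilde (g hr vr h : ℝ) : ℝ := h * phir g hr vr h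

/-!
It suffices that `φ_r(h) > √(g h)`. On the rarefaction branch `φ_r(h) ≥ 2√(g h)`. On the shock
branch `h > h_r`, put `s = √(g / h)`, so that `√(g h) = h s`. The shock factor is at least `s`
(as `h + h_r ≥ 2 h_r`) and `√(g h_r) ≥ h_r s` (as `h ≥ h_r`), hence
`φ_r(h) ≥ 2 h_r s + (h - h_r) s > h s`.
-/

open Real

lemma sqrt_mul_eq_mul_sqrt_div (a : ℝ) {b : ℝ} (hb : 0 < b) : √(a * b) = b * √(a / b) := by
  rw [← sqrt_sq hb.le, ← sqrt_mul (sq_nonneg b), sqrt_sq hb.le]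
  congr 1
  field_simp

lemma mul_sqrt_div_le_sqrt_mul {g a b : ℝ} (hg : 0 ≤ g) (ha : 0 < a) (hab : a ≤ b) :
    a * √(g / b) ≤ √(g * a) := by
  rw [sqrt_mul_eq_mul_sqrt_div g ha]
  gcongr

lemma sqrt_div_le_sqrt_shock_factor {g h hr : ℝ} (hg : 0 ≤ g) (hhr : 0 < hr) (hle : hr ≤ h) :
    √(g / h) ≤ √(g * (h + hr) / (2 * h * hr)) := by
  have hh : 0 < h := hhr.trans_le hle
  apply sqrt_le_sqrt
  rw [div_le_div_iff₀ hh (by positivity)]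
  nlinarith [mul_nonneg (mul_nonneg hg hh.le) (sub_nonneg.2 hle)]

lemma sqrt_lt_shock_branch {g h hr vr : ℝ} (hg : 0 < g) (hhr : 0 < hr) (hlt : hr < h)
    (hvr : 2 * √(g * hr) ≤ vr) :
    √(g * h) < vr + (h - hr) * √(g * (h + hr) / (2 * h * hr)) := by
  have hh : 0 < h := hhr.trans hlt
  have hs : 0 < √(g / h) := sqrt_pos.2 (div_pos hg hh)
  have h_right : hr * √(g / h) ≤ √(g * hr) := mul_sqrt_div_le_sqrt_mul hg.le hhr hlt.le
  have h_shock : (h - hr) * √(g / h) ≤ (h - hr) * √(g * (h + hr) / (2 * h * hr)) :=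
    mul_le_mul_of_nonneg_left (sqrt_div_le_sqrt_shock_factor hg.le hhr hlt.le)
      (sub_nonneg.2 hlt.le)
  rw [sqrt_mul_eq_mul_sqrt_div g hh]
  linarith [mul_pos hhr hs]

lemma sqrt_lt_phir {g hr vr h : ℝ} (hg : 0 < g) (hhr : 0 < hr) (hvr : 2 * √(g * hr) ≤ vr)
    (hh : 0 < h) : √(g * h) < phir g hr vr h := by
  unfold phir
  split_ifs with hle
  · linarith [sqrt_pos.2 (mul_pos hg hh)]
  · exact sqrt_lt_shock_branch hg hhr (not_le.1 hle) hvr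

/-- If `v_r ≥ 2√(g h_r)`, the discharge-form inverse Lax curve lies strictly above
the upper critical curve `C̃⁺(h) = h√(g h)` for every `h > 0`. -/
theorem phirTilde_above_upper_critical (g hr vr : ℝ) (hg : 0 < g) (hhr : 0 < hr)
    (hvr : vr ≥ 2 * Real.sqrt (g * hr)) :
    ∀ h : ℝ, 0 < h → phirTilde g hr vr h > h * Real.sqrt (g * h) :=
  fun _ hh => mul_lt_mul_of_pos_left (sqrt_lt_phir hg hhr hvr hh) hh
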